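/- Let A ∈ ℝ^{m×n} with SVD A = U Σ Vᵀ, let Û_k ∈ ℝ^{m×k} satisfy Û_kᵀ Û_k = I_k, let Σ̂_k ∈ ℝ^{k×k} be a positive definite diagonal matrix, let α > 0, and set K_{α,0} = α Û_k Σ̂_k² Û_kᵀ. If U_kᵀ K_{α,0} U_k is nonsingular, then τ_k(K_{α,0}) = ‖tanmat(U_k, Û_k) Σ_k‖_F / ‖Σ̄_k‖_F and ρ_k(K_{α,0}) = 0. -/

import Mathlib

open MeasureTheory ProbabilityTheory Matrix

/-- Frobenius norm of a real matrix. -/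
noncomputable def frob {α β : Type*} [Fintype α] [Fintype β] (M : Matrix α β ℝ) : ℝ :=
  Real.sqrt (∑ i, ∑ j, M i j ^ 2)

/-- Orthogonal projection `π(M) = M M⁺` onto the range of a full column rank matrix `M`,
via the explicit formula `M (Mᵀ M)⁻¹ Mᵀ` for the Moore-Penrose inverse. -/
noncomputable def proj {α β : Type*} [Fintype α] [Fintype β] [DecidableEq β]
    (M : Matrix α β ℝ) : Matrix α α ℝ :=
  M * (Mᵀ * M)⁻¹ * Mᵀ

/-- Moore-Penrose inverse `M⁺ = Mᵀ (M Mᵀ)⁻¹` of a full row rank matrix `M`. -/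
noncomputable def rpinv {α β : Type*} [Fintype α] [Fintype β] [DecidableEq α]
    (M : Matrix α β ℝ) : Matrix β α ℝ :=
  Mᵀ * (M * Mᵀ)⁻¹

/-- The positive semidefinite square root of a positive semidefinite matrix
(the definition `Matrix.PosSemidef.sqrt` of the older Mathlib, since removed). -/
noncomputable def Matrix.PosSemidef.sqrt {n 𝕜 : Type*} [Fintype n] [DecidableEq n] [RCLike 𝕜]
    [PartialOrder 𝕜] [StarOrderedRing 𝕜]
    {A : Matrix n n 𝕜} (hA : A.PosSemidef) : Matrix n n 𝕜 :=
  hA.1.eigenvectorUnitary.1 * diagonal ((↑) ∘ Real.sqrt ∘ hA.1.eigenvalues) *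
  (star hA.1.eigenvectorUnitary : Matrix n n 𝕜)

/-- `X : Ω → ι → ℝ` is a centered Gaussian vector with covariance matrix `K`:
every linear functional `⟨a, X⟩` is a real Gaussian with mean `0` and variance `aᵀ K a`. -/
def IsCenteredGaussian {Ω : Type*} [MeasurableSpace Ω] (μ : Measure Ω)
    {ι : Type*} [Fintype ι] (X : Ω → ι → ℝ) (K : Matrix ι ι ℝ) : Prop :=
  ∀ a : ι → ℝ,
    μ.map (fun ω => ∑ i, a i * X ω i) =
      gaussianReal 0 (Real.toNNReal (∑ i, ∑ j, a i * K i j * a j))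

theorem stmt_18
    (k m' n' : ℕ)
    (U : Matrix (Fin k ⊕ Fin m') (Fin k ⊕ Fin m') ℝ)
    (V : Matrix (Fin k ⊕ Fin n') (Fin k ⊕ Fin n') ℝ)
    (σ : ℕ → ℝ)
    (hU : Uᵀ * U = 1) (hV : Vᵀ * V = 1)
    (hσmono : ∀ i j : ℕ, i ≤ j → σ j ≤ σ i) (hσnn : ∀ i, 0 ≤ σ i)
    (Sk : Matrix (Fin k) (Fin k) ℝ)
    (hSk : Sk = Matrix.diagonal fun i : Fin k => σ ((i : ℕ) + 1))
    (Sb : Matrix (Fin m') (Fin n') ℝ)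
    (hSb : Sb = Matrix.of fun (i : Fin m') (j : Fin n') => if (i : ℕ) = (j : ℕ) then σ (k + (i : ℕ) + 1) else 0)
    (A : Matrix (Fin k ⊕ Fin m') (Fin k ⊕ Fin n') ℝ)
    (hA : A = U * Matrix.fromBlocks Sk 0 0 Sb * Vᵀ)
    (Uk : Matrix (Fin k ⊕ Fin m') (Fin k) ℝ) (hUk : Uk = U.submatrix id Sum.inl)
    (Ub : Matrix (Fin k ⊕ Fin m') (Fin m') ℝ) (hUb : Ub = U.submatrix id Sum.inr)
    (Vk : Matrix (Fin k ⊕ Fin n') (Fin k) ℝ) (hVk : Vk = V.submatrix id Sum.inl)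
    (Vb : Matrix (Fin k ⊕ Fin n') (Fin n') ℝ) (hVb : Vb = V.submatrix id Sum.inr)
    (Uhat : Matrix (Fin k ⊕ Fin m') (Fin k) ℝ) (hUhat : Uhatᵀ * Uhat = 1)
    (d : Fin k → ℝ) (hd : ∀ i, 0 < d i)
    (Shat : Matrix (Fin k) (Fin k) ℝ) (hShat : Shat = Matrix.diagonal d)
    (α : ℝ) (hα : 0 < α)
    (K : Matrix (Fin k ⊕ Fin m') (Fin k ⊕ Fin m') ℝ)
    (hKdef : K = α • (Uhat * Shat ^ 2 * Uhatᵀ)) (hK : K.PosSemidef)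
    (Kk : Matrix (Fin k) (Fin k) ℝ) (hKkdef : Kk = Ukᵀ * K * Uk)
    (hKkinv : IsUnit Kk.det)
    (τ ρ : ℝ)
    (hτ : τ = frob (Ubᵀ * (K * Uk) * Kk⁻¹ * Sk) / frob Sb)
    (hρ : ρ = frob ((1 - proj (hK.sqrt * Uk)) * hK.sqrt) *
      Real.sqrt (Sk * Sk * Kk⁻¹).trace / frob Sb) :
    τ = frob (Ubᵀ * Uhat * (Ukᵀ * Uhat)⁻¹ * Sk) / frob Sb ∧ ρ = 0 := by
  obtain ⟨M, hMdef⟩ : ∃ M : Matrix (Fin k) (Fin k) ℝ, Ukᵀ * Uhat = M := ⟨_, rfl⟩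
  have hKsymm : Kᵀ = K := by
    rw [← Matrix.conjTranspose_eq_transpose_of_trivial]; exact hK.1
  have hS2det : IsUnit (Shat ^ 2).det := by
    rw [Matrix.det_pow, isUnit_iff_ne_zero]
    refine pow_ne_zero _ ?_
    rw [hShat, Matrix.det_diagonal]
    exact Finset.prod_ne_zero_iff.2 fun i _ => (hd i).ne'
  have hKk2 : Kk = α • (M * Shat ^ 2 * Mᵀ) := by
    rw [hKkdef, hKdef, Matrix.mul_smul, Matrix.smul_mul]
    congr 1
    rw [← hMdef, Matrix.transpose_mul, Matrix.transpose_transpose]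
    simp [Matrix.mul_assoc]
  have hKUk : K * Uk = α • (Uhat * Shat ^ 2 * Mᵀ) := by
    rw [hKdef, Matrix.smul_mul]
    congr 1
    rw [← hMdef, Matrix.transpose_mul, Matrix.transpose_transpose]
    simp [Matrix.mul_assoc]
  have hUkK : Ukᵀ * K = α • (M * Shat ^ 2 * Uhatᵀ) := by
    rw [hKdef, Matrix.mul_smul]
    congr 1
    rw [← hMdef]
    simp [Matrix.mul_assoc]
  have hMdet : IsUnit M.det := by
    have h := hKkinv
    rw [hKk2, Matrix.det_smul, Matrix.det_mul, Matrix.det_mul, Matrix.det_transpose] at h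
    rw [isUnit_iff_ne_zero] at h ⊢
    intro h0
    apply h; rw [h0]; ring
  -- τ part
  have key1 : Ubᵀ * (K * Uk) * Kk⁻¹ = Ubᵀ * Uhat * M⁻¹ := by
    have h2 : Ubᵀ * Uhat * M⁻¹ * Kk = Ubᵀ * (K * Uk) := by
      rw [hKk2, hKUk, Matrix.mul_smul, Matrix.mul_smul]
      congr 1
      simp only [Matrix.mul_assoc]
      rw [Matrix.nonsing_inv_mul_cancel_left _ _ hMdet]
    calc Ubᵀ * (K * Uk) * Kk⁻¹
        = Ubᵀ * Uhat * M⁻¹ * Kk * Kk⁻¹ := by rw [h2]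
      _ = Ubᵀ * Uhat * M⁻¹ := Matrix.mul_nonsing_inv_cancel_right _ _ hKkinv
  refine ⟨by rw [hτ, key1, hMdef], ?_⟩
  -- ρ part
  have hKkInvEq : Kk⁻¹ = α⁻¹ • ((Mᵀ)⁻¹ * (Shat ^ 2)⁻¹ * M⁻¹) := by
    apply Matrix.inv_eq_right_inv
    rw [hKk2, Matrix.smul_mul, Matrix.mul_smul, smul_smul, mul_inv_cancel₀ hα.ne', one_smul]
    have hMTdet : IsUnit (Mᵀ).det := by rwa [Matrix.det_transpose]
    simp only [Matrix.mul_assoc]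
    rw [Matrix.mul_nonsing_inv_cancel_left _ _ hMTdet,
      Matrix.mul_nonsing_inv_cancel_left _ _ hS2det, Matrix.mul_nonsing_inv _ hMdet]
  have hKP : K * (Uk * (Kk⁻¹ * (Ukᵀ * K))) = K := by
    have hassoc : K * (Uk * (Kk⁻¹ * (Ukᵀ * K))) = (K * Uk) * Kk⁻¹ * (Ukᵀ * K) := by
      simp [Matrix.mul_assoc]
    rw [hassoc, hKUk, hUkK, hKkInvEq, hKdef]
    simp only [Matrix.mul_smul, Matrix.smul_mul, smul_smul]
    rw [show α * (α⁻¹ * α) = α by field_simp]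
    congr 1
    have hMTdet : IsUnit (Mᵀ).det := by rwa [Matrix.det_transpose]
    simp only [Matrix.mul_assoc]
    rw [Matrix.nonsing_inv_mul_cancel_left _ _ hMdet,
      Matrix.mul_nonsing_inv_cancel_left _ _ hMTdet,
      Matrix.mul_nonsing_inv_cancel_left _ _ hS2det]
  set X : Matrix (Fin k ⊕ Fin m') (Fin k ⊕ Fin m') ℝ :=
    1 - Uk * (Kk⁻¹ * (Ukᵀ * K)) with hX
  have hKX : K * X = 0 := by
    rw [hX, Matrix.mul_sub, Matrix.mul_one, hKP, sub_self]
  have hSsymm : (hK.sqrt)ᵀ = hK.sqrt := by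
    rw [← Matrix.conjTranspose_eq_transpose_of_trivial]
    simp [Matrix.PosSemidef.sqrt, Matrix.conjTranspose_mul, Matrix.star_eq_conjTranspose, Matrix.mul_assoc]
  have hSS : hK.sqrt * hK.sqrt = K := by
    have hu : (star hK.1.eigenvectorUnitary : Matrix (Fin k ⊕ Fin m') (Fin k ⊕ Fin m') ℝ) *
        hK.1.eigenvectorUnitary.1 = 1 :=
      Unitary.coe_star_mul_self _
    conv_rhs => rw [hK.1.spectral_theorem, Unitary.conjStarAlgAut_apply]
    simp only [Matrix.PosSemidef.sqrt, Matrix.mul_assoc]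
    rw [← Matrix.mul_assoc (star _ : Matrix (Fin k ⊕ Fin m') (Fin k ⊕ Fin m') ℝ), hu, Matrix.one_mul,
      ← Matrix.mul_assoc (diagonal _), diagonal_mul_diagonal]
    congr 3
    funext i
    simp [Real.mul_self_sqrt (hK.eigenvalues_nonneg i)]
  have hSX : hK.sqrt * X = 0 := by
    have h0 : (hK.sqrt * X)ᴴ * (hK.sqrt * X) = 0 := by
      rw [Matrix.conjTranspose_eq_transpose_of_trivial, Matrix.transpose_mul, hSsymm,
        Matrix.mul_assoc, ← Matrix.mul_assoc hK.sqrt hK.sqrt X, hSS, hKX, Matrix.mul_zero]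
    exact Matrix.conjTranspose_mul_self_eq_zero.mp h0
  have hGram : (hK.sqrt * Uk)ᵀ * (hK.sqrt * Uk) = Kk := by
    rw [Matrix.transpose_mul, hSsymm, Matrix.mul_assoc,
      ← Matrix.mul_assoc hK.sqrt hK.sqrt Uk, hSS, hKkdef, Matrix.mul_assoc]
  have hprojEq : proj (hK.sqrt * Uk) = hK.sqrt * Uk * Kk⁻¹ * (Ukᵀ * hK.sqrt) := by
    unfold proj
    rw [hGram, Matrix.transpose_mul, hSsymm]
  have hprojS : (1 - proj (hK.sqrt * Uk)) * hK.sqrt = hK.sqrt * X := by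
    rw [hX, Matrix.mul_sub, Matrix.mul_one, Matrix.sub_mul, Matrix.one_mul, hprojEq]
    congr 1
    calc hK.sqrt * Uk * Kk⁻¹ * (Ukᵀ * hK.sqrt) * hK.sqrt
        = hK.sqrt * (Uk * (Kk⁻¹ * (Ukᵀ * (hK.sqrt * hK.sqrt)))) := by
          simp [Matrix.mul_assoc]
      _ = hK.sqrt * (Uk * (Kk⁻¹ * (Ukᵀ * K))) := by rw [hSS]
  rw [hρ, hprojS, hSX]
  simp [frob]
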